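/- (Clifford-algebra curvature trace identity, used in the proof of Lemma 3.2.) Let n ≥ 2, let V = EuclideanSpace ℝ (Fin n), let Q be the quadratic form Q(x) = −‖x‖² on V, let Cl denote the Clifford algebra of (V, Q) with canonical embedding ι : V → Cl, and write e_i := ι(standard basis vector i). Let r : Fin n → Fin n → Fin n → Fin n → ℝ be an algebraic curvature tensor in coordinates: r i j k l = −r j i k l = −r i j l k, r i j k l = r k l i j, and r i j k l + r j k i l + r k i j l = 0. Then, in Cl: Σ_{i<j} Σ_{k<l} (r i j k l) • (e_i · e_j · e_k · e_l) = (Σ_{i<j} r i j j i) • 1. -/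

import Mathlib

/-!
Fix `l`. The first Bianchi identity turns `∑ r_{ijkl} e_i e_j e_k` into minus the two sums in
which the Clifford product is cyclically rotated. Rotating the generators back costs only
contractions with `e_a e_b + e_b e_a = -2 δ_{ab}`, which the antisymmetry of `r` in its first pair
turns into multiples of the Ricci contraction, so `3 ∑ r_{ijkl} e_i e_j e_k = 6 ∑ r_{ijil} e_j`.
What remains is `∑ Ric_{jl} e_j e_l` with `Ric` symmetric: the off-diagonal terms cancel because
distinct generators anticommute, and `e_j² = -1` leaves minus the trace of `Ric`.
-/

open Finset

/-- The quadratic form `x ↦ -‖x‖²` on `EuclideanSpace ℝ (Fin n)`. -/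
noncomputable def negNormSqForm (n : ℕ) : QuadraticForm ℝ (EuclideanSpace ℝ (Fin n)) :=
  -(LinearMap.BilinMap.toQuadraticMap (innerₗ (EuclideanSpace ℝ (Fin n))))

/-- The image `e_i` of the `i`-th standard basis vector in the Clifford algebra of
`(EuclideanSpace ℝ (Fin n), -‖·‖²)`. -/
noncomputable def cliffordGen (n : ℕ) (i : Fin n) :
    CliffordAlgebra (negNormSqForm n) :=
  CliffordAlgebra.ι (negNormSqForm n) (EuclideanSpace.single i 1)

theorem sum_sum_eq_two_nsmul_sum_sum_Ioi {α M : Type*} [AddCommMonoid M] [LinearOrder α]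
    [Fintype α] [LocallyFiniteOrderTop α] [LocallyFiniteOrderBot α] {f : α → α → M}
    (hf : ∀ i j, f i j = f j i) (hdiag : ∀ i, f i i = 0) :
    ∑ i, ∑ j, f i j = 2 • ∑ i, ∑ j ∈ Ioi i, f i j := by
  have hoff : ∀ i, ∑ j, f i j = ∑ j ∈ {i}ᶜ, f j i := fun i => by
    rw [← add_sum_erase _ _ (mem_univ i), hdiag, zero_add, ← compl_singleton]
    exact sum_congr rfl fun j _ => hf i j
  simp_rw [hoff, ← sum_sum_Ioi_add_eq_sum_sum_off_diag, hf _ (_ : α), ← two_nsmul, ← smul_sum]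

theorem sum_sum_eq_zero_of_antisymm {α M : Type*} [Fintype α] [AddCommGroup M] {f : α → α → M}
    (hf : ∀ i j, f i j = -f j i) (hdiag : ∀ i, f i i = 0) : ∑ i, ∑ j, f i j = 0 := by
  rw [← Fintype.sum_prod_type']
  refine sum_ninvolution Prod.swap (fun p => by simp [hf p.1 p.2]) (fun p hp hswap => hp ?_)
    (fun _ => mem_univ _) Prod.swap_swap
  rw [← Prod.fst_swap (p := p), hswap]
  exact hdiag _

theorem sum_smul_eq_of_cyclic_sum_eq_zero {κ R N : Type*} [Fintype κ] [Ring R] [AddCommGroup N]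
    [Module R N] {t : κ → κ → κ → R} (hcyclic : ∀ i j k, t i j k + t j k i + t k i j = 0)
    (F : κ → κ → κ → N) :
    ∑ i, ∑ j, ∑ k, t i j k • F i j k =
      -∑ i, ∑ j, ∑ k, t i j k • F k i j - ∑ i, ∑ j, ∑ k, t i j k • F j k i := by
  rw [sum_comm_cycle (f := fun i j k => t i j k • F k i j),
    ← sum_comm_cycle (f := fun i j k => t k i j • F i j k)]
  simp only [← sum_neg_distrib, ← sum_sub_distrib, ← neg_smul, ← sub_smul]
  refine sum_congr rfl fun i _ => sum_congr rfl fun j _ => sum_congr rfl fun k _ => ?_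
  congr 1
  rw [eq_sub_iff_add_eq, eq_neg_iff_add_eq_zero, ← hcyclic i j k]
  abel

namespace CliffordAlgebra

variable {R M : Type*} [CommRing R] [AddCommGroup M] [Module R M] {Q : QuadraticForm R M}

open QuadraticMap

theorem ι_mul_ι_mul_ι_rotate (a b c : M) :
    ι Q c * ι Q a * ι Q b =
      ι Q a * ι Q b * ι Q c + polar Q c a • ι Q b - polar Q c b • ι Q a := by
  rw [ι_mul_ι_comm c a, sub_mul, mul_assoc, ι_mul_ι_comm c b, mul_sub, ← mul_assoc,
    Algebra.algebraMap_eq_smul_one, Algebra.algebraMap_eq_smul_one, smul_mul_assoc, one_mul,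
    mul_smul_comm, mul_one]
  abel

theorem sum_smul_ι_mul_ι_mul_ι_of_bianchi {κ : Type*} [Fintype κ] [Invertible (3 : R)]
    (v : κ → M) {t : κ → κ → κ → R} (hanti : ∀ i j k, t i j k = -t j i k)
    (hbianchi : ∀ i j k, t i j k + t j k i + t k i j = 0) :
    ∑ i, ∑ j, ∑ k, t i j k • (ι Q (v i) * ι Q (v j) * ι Q (v k)) =
      -∑ i, ∑ j, ∑ k, (t i j k * polar Q (v k) (v i)) • ι Q (v j) := by
  set X := ∑ i, ∑ j, ∑ k, t i j k • (ι Q (v i) * ι Q (v j) * ι Q (v k))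
  set C := ∑ i, ∑ j, ∑ k, (t i j k * polar Q (v k) (v i)) • ι Q (v j)
  have hrotate₁ : ∑ i, ∑ j, ∑ k, t i j k • (ι Q (v k) * ι Q (v i) * ι Q (v j)) =
      X + C - ∑ i, ∑ j, ∑ k, (t i j k * polar Q (v k) (v j)) • ι Q (v i) := by
    simp only [X, C, ← sum_add_distrib, ← sum_sub_distrib]
    refine sum_congr rfl fun i _ => sum_congr rfl fun j _ => sum_congr rfl fun k _ => ?_
    rw [ι_mul_ι_mul_ι_rotate, smul_sub, smul_add, smul_smul, smul_smul]
  have hrotate₂ : ∑ i, ∑ j, ∑ k, t i j k • (ι Q (v j) * ι Q (v k) * ι Q (v i)) =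
      X - ∑ i, ∑ j, ∑ k, (t i j k * polar Q (v i) (v j)) • ι Q (v k) + C := by
    simp only [X, C, ← sum_add_distrib, ← sum_sub_distrib]
    refine sum_congr rfl fun i _ => sum_congr rfl fun j _ => sum_congr rfl fun k _ => ?_
    rw [ι_mul_ι_mul_ι_rotate (v j) (v k) (v i), polar_comm _ (v i) (v k)]
    simp only [smul_sub, smul_add, smul_smul]
    abel
  have hswap : ∑ i, ∑ j, ∑ k, (t i j k * polar Q (v k) (v j)) • ι Q (v i) = -C := by
    simp only [C, ← sum_neg_distrib]
    rw [sum_comm]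
    refine sum_congr rfl fun i _ => sum_congr rfl fun j _ => sum_congr rfl fun k _ => ?_
    rw [hanti, neg_mul, neg_smul]
  have hpolar : ∑ i, ∑ j, ∑ k, (t i j k * polar Q (v i) (v j)) • ι Q (v k) = 0 := by
    rw [sum_comm_cycle]
    refine sum_eq_zero fun k _ => sum_sum_eq_zero_of_antisymm (fun i j => ?_) fun i => ?_
    · rw [hanti, polar_comm _ (v j), neg_mul, neg_smul]
    · have hdiag : t i i k * polar Q (v i) (v i) = 0 := by
        rw [polar_self]
        linear_combination (Q (v i)) * hanti i i k
      rw [hdiag, zero_smul]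
  have h3 : (3 : R) • X = (3 : R) • -C := by
    have hcycle := sum_smul_eq_of_cyclic_sum_eq_zero hbianchi
      fun i j k => ι Q (v i) * ι Q (v j) * ι Q (v k)
    rw [hrotate₁, hrotate₂, hswap, hpolar] at hcycle
    linear_combination (norm := module) hcycle
  exact (isUnit_of_invertible (3 : R)).smul_left_cancel.mp h3

end CliffordAlgebra

section EuclideanFrame

variable {n : ℕ}

open CliffordAlgebra QuadraticMap

theorem polar_negNormSqForm (x y : EuclideanSpace ℝ (Fin n)) :
    polar (negNormSqForm n) x y = -2 * inner ℝ x y := by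
  simp only [polar, negNormSqForm, neg_apply, LinearMap.BilinMap.toQuadraticMap_apply,
    innerₗ_apply_apply, inner_add_add_self, real_inner_comm x y]
  ring

theorem polar_negNormSqForm_single (i j : Fin n) :
    polar (negNormSqForm n) (EuclideanSpace.single i 1) (EuclideanSpace.single j 1) =
      if i = j then -2 else 0 := by
  rw [polar_negNormSqForm, EuclideanSpace.inner_single_left, PiLp.single_apply]
  split_ifs <;> simp_all

theorem cliffordGen_mul_self (i : Fin n) : cliffordGen n i * cliffordGen n i = -1 := by
  have hQ : negNormSqForm n (EuclideanSpace.single i 1) = -1 := by simp [negNormSqForm]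
  rw [cliffordGen, ι_sq_scalar, hQ, map_neg, map_one]

theorem cliffordGen_mul_comm_of_ne {i j : Fin n} (h : i ≠ j) :
    cliffordGen n i * cliffordGen n j = -(cliffordGen n j * cliffordGen n i) :=
  ι_mul_ι_comm_of_isOrtho <| isOrtho_polarBilin.mp <| by
    simp [polar_negNormSqForm_single, h]

theorem smul_cliffordGen_mul_swap {c : Fin n → Fin n → ℝ} (hc : ∀ i j, c i j = -c j i)
    (i j : Fin n) :
    c j i • (cliffordGen n j * cliffordGen n i) = c i j • (cliffordGen n i * cliffordGen n j) := by
  rcases eq_or_ne i j with rfl | h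
  · rfl
  · rw [cliffordGen_mul_comm_of_ne h.symm, hc, neg_smul, smul_neg, neg_neg]

theorem sum_smul_cliffordGen_mul_of_symm {c : Fin n → Fin n → ℝ} (hc : ∀ i j, c i j = c j i) :
    ∑ i, ∑ j, c i j • (cliffordGen n i * cliffordGen n j) = -(∑ i, c i i) • 1 := by
  -- adding `c i i • 1` on the diagonal makes the summand antisymmetric in `(i, j)`
  have h := sum_sum_eq_zero_of_antisymm
    (f := fun i j => c i j • (cliffordGen n i * cliffordGen n j) + if i = j then c i i • 1 else 0)
    (fun i j => ?_) (fun i => by simp [cliffordGen_mul_self])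
  · simp only [sum_add_distrib, sum_ite_eq, mem_univ, if_true] at h
    rw [neg_smul, sum_smul]
    exact eq_neg_of_add_eq_zero_left h
  · rcases eq_or_ne i j with rfl | h
    · simp [cliffordGen_mul_self]
    · simp [h, h.symm, hc i j, cliffordGen_mul_comm_of_ne h]

theorem sum_smul_cliffordGen_mul_mul_of_bianchi {t : Fin n → Fin n → Fin n → ℝ}
    (hanti : ∀ i j k, t i j k = -t j i k)
    (hbianchi : ∀ i j k, t i j k + t j k i + t k i j = 0) :
    ∑ i, ∑ j, ∑ k, t i j k • (cliffordGen n i * cliffordGen n j * cliffordGen n k) =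
      (2 : ℝ) • ∑ j, (∑ i, t i j i) • cliffordGen n j := by
  have h := sum_smul_ι_mul_ι_mul_ι_of_bianchi (Q := negNormSqForm n)
    (fun i => EuclideanSpace.single i 1) hanti hbianchi
  simp only [polar_negNormSqForm_single, mul_ite, mul_zero, ite_smul, zero_smul, sum_ite_eq',
    mem_univ, if_true] at h
  refine h.trans ?_
  rw [sum_comm, smul_sum, ← sum_neg_distrib]
  refine sum_congr rfl fun j _ => ?_
  rw [sum_smul, smul_sum, ← sum_neg_distrib]
  refine sum_congr rfl fun i _ => ?_
  rw [← neg_smul, smul_smul, cliffordGen]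
  congr 1
  ring

theorem sum_smul_cliffordGen_mul_mul_mul_of_bianchi {t : Fin n → Fin n → Fin n → Fin n → ℝ}
    (hanti : ∀ i j k l, t i j k l = -t j i k l)
    (hbianchi : ∀ i j k l, t i j k l + t j k i l + t k i j l = 0) :
    ∑ i, ∑ j, ∑ k, ∑ l, t i j k l •
        (cliffordGen n i * cliffordGen n j * cliffordGen n k * cliffordGen n l) =
      (2 : ℝ) • ∑ j, ∑ l, (∑ i, t i j i l) • (cliffordGen n j * cliffordGen n l) := by
  have hreorder : ∀ F : Fin n → Fin n → Fin n → Fin n → CliffordAlgebra (negNormSqForm n),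
      ∑ i, ∑ j, ∑ k, ∑ l, F i j k l = ∑ l, ∑ i, ∑ j, ∑ k, F i j k l := fun F =>
    (sum_congr rfl fun i _ => sum_comm_cycle).trans sum_comm
  rw [hreorder, sum_comm (s := univ) (t := univ) (f := fun j l => (∑ i, t i j i l) •
    (cliffordGen n j * cliffordGen n l)), smul_sum]
  refine sum_congr rfl fun l _ => ?_
  calc _ = (∑ i, ∑ j, ∑ k, t i j k l • (cliffordGen n i * cliffordGen n j * cliffordGen n k)) *
        cliffordGen n l := by simp only [sum_mul, smul_mul_assoc]
    _ = _ := by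
      rw [sum_smul_cliffordGen_mul_mul_of_bianchi (fun i j k => hanti i j k l)
        (fun i j k => hbianchi i j k l), smul_mul_assoc, sum_mul]
      simp only [smul_mul_assoc]

theorem sum_smul_cliffordGen_mul_mul_mul_eq_four_nsmul_sum_Ioi
    {t : Fin n → Fin n → Fin n → Fin n → ℝ} (hanti₁₂ : ∀ i j k l, t i j k l = -t j i k l)
    (hanti₃₄ : ∀ i j k l, t i j k l = -t i j l k) :
    ∑ i, ∑ j, ∑ k, ∑ l, t i j k l •
        (cliffordGen n i * cliffordGen n j * cliffordGen n k * cliffordGen n l) =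
      4 • ∑ i, ∑ j ∈ Ioi i, ∑ k, ∑ l ∈ Ioi k,
        t i j k l • (cliffordGen n i * cliffordGen n j * cliffordGen n k * cliffordGen n l) := by
  have hswap₁₂ (i j k l) : t j i k l • (cliffordGen n j * cliffordGen n i * cliffordGen n k *
      cliffordGen n l) = t i j k l • (cliffordGen n i * cliffordGen n j * cliffordGen n k *
      cliffordGen n l) := by
    simp only [mul_assoc _ (cliffordGen n k), ← smul_mul_assoc,
      smul_cliffordGen_mul_swap (fun i j => hanti₁₂ i j k l)]
  have hswap₃₄ (i j k l) : t i j l k • (cliffordGen n i * cliffordGen n j * cliffordGen n l *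
      cliffordGen n k) = t i j k l • (cliffordGen n i * cliffordGen n j * cliffordGen n k *
      cliffordGen n l) := by
    simp only [mul_assoc (cliffordGen n i * cliffordGen n j), ← mul_smul_comm,
      smul_cliffordGen_mul_swap (hanti₃₄ i j)]
  have ht_ii (i k l) : t i i k l = 0 := by linarith [hanti₁₂ i i k l]
  have ht_kk (i j k) : t i j k k = 0 := by linarith [hanti₃₄ i j k k]
  simp_rw [sum_sum_eq_two_nsmul_sum_sum_Ioi (hswap₃₄ _ _ · · |>.symm) (by simp [ht_kk]),
    ← smul_sum]
  rw [show (4 : ℕ) = 2 * 2 from rfl, mul_smul]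
  congr 1
  exact sum_sum_eq_two_nsmul_sum_sum_Ioi (fun i j => sum_congr rfl fun k _ => sum_congr rfl
    fun l _ => (hswap₁₂ i j k l).symm) (by simp [ht_ii])

end EuclideanFrame

theorem clifford_curvature_trace_general
    {n : ℕ}
    (r : Fin n → Fin n → Fin n → Fin n → ℝ)
    (hr1 : ∀ i j k l, r i j k l = -r j i k l)
    (hr2 : ∀ i j k l, r i j k l = -r i j l k)
    (hr3 : ∀ i j k l, r i j k l = r k l i j)
    (hrb : ∀ i j k l, r i j k l + r j k i l + r k i j l = 0) :
    ∑ i, ∑ j ∈ Ioi i, ∑ k, ∑ l ∈ Ioi k,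
        (r i j k l) • (cliffordGen n i * cliffordGen n j * cliffordGen n k * cliffordGen n l) =
      (∑ i, ∑ j ∈ Ioi i, r i j j i) • (1 : CliffordAlgebra (negNormSqForm n)) := by
  have hr_ii (i k l) : r i i k l = 0 := by linarith [hr1 i i k l]
  have hricci_symm (j l) : ∑ i, r i j i l = ∑ i, r i l i j := sum_congr rfl fun i _ => hr3 i j i l
  have hscalar : -∑ j, ∑ i, r i j i j = 2 • ∑ i, ∑ j ∈ Ioi i, r i j j i := by
    rw [← sum_sum_eq_two_nsmul_sum_sum_Ioi (fun i j => hr3 i j j i) (fun i => hr_ii i i i),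
      sum_comm]
    simp only [← sum_neg_distrib, ← hr2]
  have h := sum_smul_cliffordGen_mul_mul_mul_eq_four_nsmul_sum_Ioi hr1 hr2
  rw [sum_smul_cliffordGen_mul_mul_mul_of_bianchi hr1 hrb,
    sum_smul_cliffordGen_mul_of_symm hricci_symm, hscalar] at h
  linear_combination (norm := module) (4 : ℝ)⁻¹ • h.symm

/-- **Clifford-algebra curvature trace identity** (used in the proof of Lemma 3.2 of
the paper).  For an algebraic curvature tensor `r` in coordinates,
`∑_{i<j} ∑_{k<l} r i j k l • (e_i e_j e_k e_l) = (∑_{i<j} r i j j i) • 1`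
in the Clifford algebra of `(ℝⁿ, -‖·‖²)`; i.e. `∑ α_i ∘ R(α_i) = -(1/4)·tr R`. -/
theorem clifford_curvature_trace
    {n : ℕ} (hn : 2 ≤ n)
    (r : Fin n → Fin n → Fin n → Fin n → ℝ)
    (hr1 : ∀ i j k l, r i j k l = -r j i k l)
    (hr2 : ∀ i j k l, r i j k l = -r i j l k)
    (hr3 : ∀ i j k l, r i j k l = r k l i j)
    (hrb : ∀ i j k l, r i j k l + r j k i l + r k i j l = 0) :
    ∑ i, ∑ j ∈ Ioi i, ∑ k, ∑ l ∈ Ioi k,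
        (r i j k l) • (cliffordGen n i * cliffordGen n j * cliffordGen n k * cliffordGen n l) =
      (∑ i, ∑ j ∈ Ioi i, r i j j i) • (1 : CliffordAlgebra (negNormSqForm n)) :=
  clifford_curvature_trace_general r hr1 hr2 hr3 hrb
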